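/- arXiv:1801.03126 — 3 statements merged into one kernel-verified Lean document; each statement's English description precedes it below -/
import Mathlib

section
/- Let λ be a Dyck path of length 2n with up steps U = {u₁ < u₂ < ... < u_n} and down steps D = {d₁, ..., d_n}, where (u_i, d_i) is a chord (d_i is the matching down step of u_i). Then the inversion number I(D) = |{(i,j) : i < j and d_i > d_j}| equals (𝒜(λ) − n)/2, where 𝒜(λ) = Σ_{i=0}^{2n} h_i is the total area under the path (the sum of the heights of its vertices). -/
/-- Let `h : ℕ → ℕ` be (the heights of) a Dyck path of length `2n` (`h 0 = h (2n) = 0`,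
consecutive heights differ by `1`), whose chords are `(u i, d i)` for `i : Fin n`:
`u` lists the up steps in increasing order, and `d i` is the matching down step of
`u i`, i.e. the closest step to the right of `u i` at the same height
(`h (d i) = h (u i − 1)` and all intermediate heights are strictly larger).
Then the inversion number `I(D) = #{(i,j) : i < j, d i > d j}` satisfies
`2 I(D) + n = 𝒜(λ)`, i.e. `I(D) = (𝒜(λ) − n)/2`, where `𝒜(λ) = ∑_{i=0}^{2n} h i`
is the total area under the path. -/
theorem stmt_5 (n : ℕ) (h : ℕ → ℕ) (u d : Fin n → ℕ)
    (h0 : h 0 = 0) (h2n : h (2 * n) = 0)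
    (hstep : ∀ i < 2 * n, h (i + 1) = h i + 1 ∨ h i = h (i + 1) + 1)
    (hu_mono : StrictMono u)
    (hu_mem : ∀ i, 1 ≤ u i ∧ u i ≤ 2 * n)
    (hu_up : ∀ i, h (u i) = h (u i - 1) + 1)
    (hd_mem : ∀ i, u i < d i ∧ d i ≤ 2 * n)
    (hmatch : ∀ i, h (d i) = h (u i - 1))
    (hclosest : ∀ i k, u i ≤ k → k < d i → h (u i - 1) < h k)
    (hcover : ∀ k, 1 ≤ k → k ≤ 2 * n → h k = h (k - 1) + 1 → ∃ i, u i = k) :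
    2 * (Finset.univ.filter (fun p : Fin n × Fin n => p.1 < p.2 ∧ d p.2 < d p.1)).card + n
      = ∑ i ∈ Finset.range (2 * n + 1), h i := by
  have hu_pos : ∀ i, 1 ≤ u i := fun i => (hu_mem i).1
  have hd_gt : ∀ i, u i < d i := fun i => (hd_mem i).1
  -- every d i is a down step
  have hd_down : ∀ i, h (d i - 1) = h (d i) + 1 := by
    intro i
    have hg := hd_gt i
    have h3 : h (u i - 1) < h (d i - 1) := hclosest i _ (by omega) (by omega)
    have h4 : d i - 1 < 2 * n := by have := (hd_mem i).2; have := hu_pos i; omega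
    have h5 := hstep (d i - 1) h4
    have h6 : d i - 1 + 1 = d i := by have := hu_pos i; omega
    rw [h6] at h5
    have h7 := hmatch i
    omega
  -- up steps and down steps are distinct positions
  have hud_ne : ∀ i j, d i ≠ u j := by
    intro i j he
    have h1 := hu_up j
    have h2 := hd_down i
    rw [he] at h2
    omega
  -- noncrossing
  have noncross : ∀ i j, u i < u j → u j < d i → d j < d i := by
    intro i j hij hjd
    have huj := hu_pos j
    have key : ¬ d i ≤ d j := by
      intro hle
      have h1 : h (u i - 1) < h (u j - 1) := hclosest i (u j - 1) (by omega) (by omega)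
      have h2 := hmatch i
      have h3 := hmatch j
      rcases eq_or_lt_of_le hle with heq | hlt
      · rw [heq] at h2; omega
      · have h4 : h (u j - 1) < h (d i) := hclosest j (d i) (le_of_lt hjd) hlt
        omega
    omega
  have d_inj : Function.Injective d := by
    intro i j he
    by_contra hne
    rcases lt_trichotomy (u i) (u j) with h1 | h1 | h1
    · have := noncross i j h1 (by rw [he]; exact hd_gt j)
      omega
    · exact hne (hu_mono.injective h1)
    · have := noncross j i h1 (by rw [← he]; exact hd_gt i)
      omega
  -- each position 1..2n is an up or down step
  have hpart : ∀ k, 1 ≤ k → k ≤ 2 * n → h k = h (k - 1) + 1 ∨ h (k - 1) = h k + 1 := by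
    intro k h1 h2
    have h3 := hstep (k - 1) (by omega)
    have h4 : k - 1 + 1 = k := by omega
    rw [h4] at h3
    exact h3
  -- surjectivity of d onto down steps, via counting
  have hd_surj : ∀ k, 1 ≤ k → k ≤ 2 * n → h (k - 1) = h k + 1 → ∃ i, d i = k := by
    intro k hk1 hk2 hk3
    classical
    set Uset := (Finset.Icc 1 (2 * n)).filter (fun k => h k = h (k - 1) + 1) with hU
    set Dset := (Finset.Icc 1 (2 * n)).filter (fun k => h (k - 1) = h k + 1) with hD
    have hUset_eq : Uset = Finset.univ.image u := by
      ext m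
      simp only [hU, Finset.mem_filter, Finset.mem_Icc, Finset.mem_image, Finset.mem_univ,
        true_and]
      constructor
      · rintro ⟨⟨a1, a2⟩, a3⟩
        exact hcover m a1 a2 a3
      · rintro ⟨i, rfl⟩
        exact ⟨⟨hu_pos i, (hu_mem i).2⟩, hu_up i⟩
    have hUcard : Uset.card = n := by
      rw [hUset_eq, Finset.card_image_of_injective _ hu_mono.injective, Finset.card_univ,
        Fintype.card_fin]
    have hDset_eq : Dset = Finset.Icc 1 (2 * n) \ Uset := by
      ext m
      simp only [hD, hU, Finset.mem_filter, Finset.mem_sdiff, Finset.mem_Icc]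
      constructor
      · rintro ⟨⟨a1, a2⟩, a3⟩
        exact ⟨⟨a1, a2⟩, by intro hc; omega⟩
      · rintro ⟨⟨a1, a2⟩, a3⟩
        refine ⟨⟨a1, a2⟩, ?_⟩
        rcases hpart m a1 a2 with hc | hc
        · exact absurd ⟨⟨a1, a2⟩, hc⟩ a3
        · exact hc
    have hDcard : Dset.card = n := by
      rw [hDset_eq, Finset.card_sdiff_of_subset (by rw [hU]; exact Finset.filter_subset _ _), hUcard,
        Nat.card_Icc]
      omega
    have hsub : Finset.univ.image d ⊆ Dset := by
      intro m hm
      simp only [Finset.mem_image, Finset.mem_univ, true_and] at hm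
      obtain ⟨i, rfl⟩ := hm
      simp only [hD, Finset.mem_filter, Finset.mem_Icc]
      exact ⟨⟨by have := hd_gt i; have := hu_pos i; omega, (hd_mem i).2⟩, hd_down i⟩
    have himg : Finset.univ.image d = Dset := by
      apply Finset.eq_of_subset_of_card_le hsub
      rw [hDcard, Finset.card_image_of_injective _ d_inj, Finset.card_univ, Fintype.card_fin]
    have hkmem : k ∈ Dset := by
      simp only [hD, Finset.mem_filter, Finset.mem_Icc]
      exact ⟨⟨hk1, hk2⟩, hk3⟩
    rw [← himg] at hkmem
    simpa using hkmem
  -- h k counts the chords covering k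
  have harea : ∀ k, k ≤ 2 * n →
      h k = (Finset.univ.filter (fun i : Fin n => u i ≤ k ∧ k < d i)).card := by
    intro k
    induction k with
    | zero =>
      intro _
      rw [h0]
      symm
      rw [Finset.card_eq_zero, Finset.filter_eq_empty_iff]
      intro i _
      have := hu_pos i
      omega
    | succ k ih =>
      intro hk1
      have hk : k < 2 * n := by omega
      have ihk := ih (by omega)
      rcases hstep k hk with hup | hdn
      · obtain ⟨i0, hi0⟩ := hcover (k + 1) (by omega) (by omega) (by simpa using hup)
        have hset : (Finset.univ.filter (fun i : Fin n => u i ≤ k + 1 ∧ k + 1 < d i))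
            = insert i0 (Finset.univ.filter (fun i : Fin n => u i ≤ k ∧ k < d i)) := by
          ext j
          simp only [Finset.mem_filter, Finset.mem_insert, Finset.mem_univ, true_and]
          constructor
          · rintro ⟨hj1, hj2⟩
            by_cases hje : u j = k + 1
            · left; exact hu_mono.injective (hje.trans hi0.symm)
            · right; exact ⟨by omega, by omega⟩
          · rintro (heq | ⟨hj1, hj2⟩)
            · have := hd_gt i0
              rw [heq]
              omega
            · refine ⟨by omega, ?_⟩
              have hne : d j ≠ k + 1 := by
                intro he
                have hdj := hd_down j
                rw [he] at hdj
                simp only [Nat.add_sub_cancel] at hdj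
                omega
              omega
        have hnot : i0 ∉ Finset.univ.filter (fun i : Fin n => u i ≤ k ∧ k < d i) := by
          simp only [Finset.mem_filter, Finset.mem_univ, true_and]
          intro hc
          omega
        rw [hset, Finset.card_insert_of_notMem hnot, ← ihk]
        omega
      · obtain ⟨i0, hi0⟩ := hd_surj (k + 1) (by omega) (by omega) (by simpa using hdn)
        have hmem : i0 ∈ Finset.univ.filter (fun i : Fin n => u i ≤ k ∧ k < d i) := by
          simp only [Finset.mem_filter, Finset.mem_univ, true_and]
          have := hd_gt i0
          omega
        have hset : (Finset.univ.filter (fun i : Fin n => u i ≤ k + 1 ∧ k + 1 < d i))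
            = (Finset.univ.filter (fun i : Fin n => u i ≤ k ∧ k < d i)).erase i0 := by
          ext j
          simp only [Finset.mem_filter, Finset.mem_erase, Finset.mem_univ, true_and]
          constructor
          · rintro ⟨hj1, hj2⟩
            have hne : u j ≠ k + 1 := by
              intro he
              have := hu_up j
              rw [he] at this
              simp only [Nat.add_sub_cancel] at this
              omega
            have hji : j ≠ i0 := by
              intro he
              rw [he, hi0] at hj2
              omega
            exact ⟨hji, by omega, by omega⟩
          · rintro ⟨hne, hj1, hj2⟩
            refine ⟨by omega, ?_⟩
            have : d j ≠ k + 1 := by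
              intro he
              exact hne (d_inj (he.trans hi0.symm))
            omega
        rw [hset, Finset.card_erase_of_mem hmem, ← ihk]
        have hpos : 1 ≤ h k := by omega
        omega
  -- chord interval lemma
  have hinterval : ∀ i : Fin n,
      d i - u i = 2 * (Finset.univ.filter (fun j : Fin n => i < j ∧ d j < d i)).card + 1 := by
    intro i
    set N := Finset.univ.filter (fun j : Fin n => i < j ∧ d j < d i) with hN
    have hIco : Finset.Ico (u i + 1) (d i) = N.image u ∪ N.image d := by
      ext k
      simp only [Finset.mem_Ico, Finset.mem_union, Finset.mem_image, hN, Finset.mem_filter,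
        Finset.mem_univ, true_and]
      constructor
      · rintro ⟨hk1, hk2⟩
        have hk0 : 1 ≤ k := by have := hu_pos i; omega
        have hk2n : k ≤ 2 * n := by have := (hd_mem i).2; omega
        rcases hpart k hk0 hk2n with hkup | hkdn
        · obtain ⟨j, hj⟩ := hcover k hk0 hk2n hkup
          have h1 : u i < u j := by omega
          have h2 : d j < d i := noncross i j h1 (by omega)
          exact Or.inl ⟨j, ⟨hu_mono.lt_iff_lt.mp h1, h2⟩, hj⟩
        · obtain ⟨j, hj⟩ := hd_surj k hk0 hk2n hkdn
          have hdlt : d j < d i := by omega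
          have h1 : u i < u j := by
            rcases lt_trichotomy (u i) (u j) with hc | hc | hc
            · exact hc
            · exfalso
              have hde : d i = d j := by rw [hu_mono.injective hc]
              omega
            · exfalso
              have hui : u i < d j := by omega
              have := noncross j i hc hui
              omega
          exact Or.inr ⟨j, ⟨hu_mono.lt_iff_lt.mp h1, hdlt⟩, hj⟩
      · rintro (⟨j, ⟨hij, hdj⟩, rfl⟩ | ⟨j, ⟨hij, hdj⟩, rfl⟩)
        · have h1 : u i < u j := hu_mono hij
          have := hd_gt j
          omega
        · have h1 : u i < u j := hu_mono hij
          have := hd_gt j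
          omega
    have hdisj : Disjoint (N.image u) (N.image d) := by
      rw [Finset.disjoint_left]
      intro k hk1 hk2
      simp only [Finset.mem_image] at hk1 hk2
      obtain ⟨a, _, ha⟩ := hk1
      obtain ⟨b, _, hb⟩ := hk2
      exact hud_ne b a (hb.trans ha.symm)
    have hcard := congrArg Finset.card hIco
    rw [Finset.card_union_of_disjoint hdisj,
      Finset.card_image_of_injective _ hu_mono.injective,
      Finset.card_image_of_injective _ d_inj, Nat.card_Ico] at hcard
    have := hd_gt i
    omega
  -- double counting
  have hprod : (Finset.univ.filter (fun p : Fin n × Fin n => p.1 < p.2 ∧ d p.2 < d p.1)).card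
      = ∑ i : Fin n, (Finset.univ.filter (fun j : Fin n => i < j ∧ d j < d i)).card := by
    simp only [Finset.card_filter]
    rw [Fintype.sum_prod_type]
  have hsum : ∑ k ∈ Finset.range (2 * n + 1), h k = ∑ i : Fin n, (d i - u i) := by
    have h1 : ∀ k ∈ Finset.range (2 * n + 1),
        h k = (Finset.univ.filter (fun i : Fin n => u i ≤ k ∧ k < d i)).card := by
      intro k hk
      simp only [Finset.mem_range] at hk
      exact harea k (by omega)
    rw [Finset.sum_congr rfl h1]
    simp only [Finset.card_filter]
    rw [Finset.sum_comm]
    apply Finset.sum_congr rfl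
    intro i _
    have heq : (Finset.range (2 * n + 1)).filter (fun k => u i ≤ k ∧ k < d i)
        = Finset.Ico (u i) (d i) := by
      ext k
      simp only [Finset.mem_filter, Finset.mem_range, Finset.mem_Ico]
      have := (hd_mem i).2
      omega
    rw [← Finset.card_filter, heq, Nat.card_Ico]
  rw [hsum, hprod]
  rw [Finset.sum_congr rfl fun i (_ : i ∈ Finset.univ) => hinterval i,
    Finset.sum_add_distrib, ← Finset.mul_sum]
  simp
end

section
/- Let σ be a Dyck path of length 2n and R ⊆ {1, ..., 2n} a subset of size n that intersects each chord of σ exactly once. Then (−1)^{ΣR} = (−1)^{R·σ + (𝒜(σ)−n)/2 + n·W(σ)}, where ΣR is the sum of the elements of R, R·σ is the number of up steps of σ whose indices lie in R, and W(σ) = h₀(σ). -/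
private lemma neg_one_pow_eq_of_even_add {a b : ℕ} (hev : Even (a + b)) :
    (-1 : ℤ) ^ a = (-1) ^ b := by
  have h1 : (-1 : ℤ) ^ (a + b) = 1 := hev.neg_one_pow
  rw [pow_add] at h1
  have h2 : (-1 : ℤ) ^ b * (-1) ^ b = 1 := by
    rw [← pow_add]; exact (Even.add_self b).neg_one_pow
  calc (-1 : ℤ) ^ a = (-1) ^ a * ((-1) ^ b * (-1) ^ b) := by rw [h2, mul_one]
    _ = ((-1) ^ a * (-1) ^ b) * (-1) ^ b := by ring
    _ = (-1) ^ b := by rw [h1, one_mul]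

/-- Let `h : ℕ → ℕ` be a (standard) Dyck path of length `2n` with chords `(u i, d i)`
(`u` lists the up steps in increasing order and `d i` is the matching down step of
`u i`), and let `R ⊆ {1, …, 2n}` be a subset of size `n` that intersects each chord
exactly once.  Then `(−1)^{ΣR} = (−1)^{R⋅σ + (𝒜(σ) − n)/2}`, where `ΣR` is the sum of
the elements of `R`, `R⋅σ` is the number of up steps with index in `R`, and
`𝒜(σ) = ∑_{i=0}^{2n} h i` is the total area under the path.  (For a standard Dyck path
the winding number `W(σ)` vanishes.) -/
theorem stmt_8 (n : ℕ) (h : ℕ → ℕ) (u d : Fin n → ℕ)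
    (h0 : h 0 = 0) (h2n : h (2 * n) = 0)
    (hstep : ∀ i < 2 * n, h (i + 1) = h i + 1 ∨ h i = h (i + 1) + 1)
    (hu_mono : StrictMono u)
    (hu_mem : ∀ i, 1 ≤ u i ∧ u i ≤ 2 * n)
    (hu_up : ∀ i, h (u i) = h (u i - 1) + 1)
    (hd_mem : ∀ i, u i < d i ∧ d i ≤ 2 * n)
    (hmatch : ∀ i, h (d i) = h (u i - 1))
    (hclosest : ∀ i k, u i ≤ k → k < d i → h (u i - 1) < h k)
    (hcover : ∀ k, 1 ≤ k → k ≤ 2 * n → h k = h (k - 1) + 1 → ∃ i, u i = k)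
    (R : Finset ℕ) (hRsub : R ⊆ Finset.Icc 1 (2 * n)) (hRcard : R.card = n)
    (hRchord : ∀ i : Fin n, (u i ∈ R ∧ d i ∉ R) ∨ (u i ∉ R ∧ d i ∈ R)) :
    (-1 : ℤ) ^ (∑ k ∈ R, k)
      = (-1) ^ ((Finset.univ.filter (fun i : Fin n => u i ∈ R)).card
          + ((∑ i ∈ Finset.range (2 * n + 1), h i) - n) / 2) := by
  classical
  -- parity of heights
  have hpar : ∀ k, k ≤ 2 * n → h k % 2 = k % 2 := by
    intro k
    induction k with
    | zero => intro _; simp [h0]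
    | succ k ih =>
      intro hk
      have h1 := ih (by omega)
      have h2 := hstep k (by omega)
      omega
  -- u is injective, d is injective, u and d disjoint
  have hu_inj : Function.Injective u := hu_mono.injective
  have hud : ∀ i j : Fin n, u i ≠ d j := by
    intro i j heq
    have h1 := hclosest j (d j - 1) (by have := (hd_mem j).1; omega)
      (by have := (hd_mem j).1; omega)
    have h2 := hmatch j
    have h3 := hu_up i
    rw [heq] at h3
    have h4 : d j - 1 + 1 = d j := by have := (hd_mem j).1; omega
    omega
  have hd_key : ∀ i j : Fin n, i < j → d i ≠ d j := by
    intro i j hij heq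
    have h1 : u i < u j := hu_mono hij
    have h2 := hclosest i (u j - 1)
      (by have := (hu_mem j).1; omega)
      (by have := (hd_mem j).1; omega)
    have h3 := hmatch i
    have h4 := hmatch j
    rw [heq] at h3
    omega
  have hd_inj : Function.Injective d := by
    intro i j hij
    by_contra hne
    rcases lt_trichotomy i j with hlt | heq | hgt
    · exact hd_key i j hlt hij
    · exact hne heq
    · exact hd_key j i hgt hij.symm
  -- the chords partition Icc 1 (2n)
  set U : Finset ℕ := Finset.image u Finset.univ with hU
  set D : Finset ℕ := Finset.image d Finset.univ with hD
  have hUcard : U.card = n := by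
    rw [hU, Finset.card_image_of_injective _ hu_inj, Finset.card_univ, Fintype.card_fin]
  have hDcard : D.card = n := by
    rw [hD, Finset.card_image_of_injective _ hd_inj, Finset.card_univ, Fintype.card_fin]
  have hdisj : Disjoint U D := by
    rw [Finset.disjoint_left]
    intro a haU haD
    rw [hU, Finset.mem_image] at haU
    rw [hD, Finset.mem_image] at haD
    obtain ⟨i, _, hi⟩ := haU
    obtain ⟨j, _, hj⟩ := haD
    exact hud i j (hi.trans hj.symm)
  have hsubUD : U ∪ D ⊆ Finset.Icc 1 (2 * n) := by
    intro a ha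
    rw [Finset.mem_union] at ha
    rw [Finset.mem_Icc]
    rcases ha with ha | ha
    · rw [hU, Finset.mem_image] at ha
      obtain ⟨i, _, hi⟩ := ha
      have := hu_mem i; omega
    · rw [hD, Finset.mem_image] at ha
      obtain ⟨j, _, hj⟩ := ha
      have h1 := hd_mem j; have h2 := hu_mem j; omega
  have hUDeq : U ∪ D = Finset.Icc 1 (2 * n) := by
    apply Finset.eq_of_subset_of_card_le hsubUD
    rw [Finset.card_union_of_disjoint hdisj, hUcard, hDcard, Nat.card_Icc]
    omega
  -- the half-gaps m
  set m : Fin n → ℕ := fun i => (d i - u i - 1) / 2 with hm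
  have hdm : ∀ i : Fin n, d i = u i + 2 * m i + 1 := by
    intro i
    have h1 := hpar (d i) (hd_mem i).2
    have h2 := hpar (u i - 1) (by have := hu_mem i; omega)
    have h3 := hmatch i
    have h4 := hu_mem i
    have h5 := hd_mem i
    simp only [hm]
    omega
  -- height as number of covering chords
  have hcard : ∀ k, k ≤ 2 * n →
      h k = (Finset.univ.filter (fun i : Fin n => u i ≤ k ∧ k < d i)).card := by
    intro k
    induction k with
    | zero =>
      intro _
      rw [h0]
      symm
      rw [Finset.card_eq_zero, Finset.filter_eq_empty_iff]
      intro i _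
      have := hu_mem i
      omega
    | succ k ih =>
      intro hk
      have ihk := ih (by omega)
      rcases hstep k (by omega) with hup | hdn
      · -- up step at k+1
        obtain ⟨i0, hi0⟩ := hcover (k + 1) (by omega) (by omega) (by simpa using hup)
        have hset : Finset.univ.filter (fun i : Fin n => u i ≤ k + 1 ∧ k + 1 < d i)
            = insert i0 (Finset.univ.filter (fun i : Fin n => u i ≤ k ∧ k < d i)) := by
          ext i
          simp only [Finset.mem_filter, Finset.mem_insert, Finset.mem_univ, true_and]
          constructor
          · rintro ⟨h1, h2⟩
            by_cases hii : i = i0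
            · exact Or.inl hii
            · refine Or.inr ⟨?_, by omega⟩
              have : u i ≠ k + 1 := fun hc => hii (hu_inj (hc.trans hi0.symm))
              omega
          · rintro (hii | ⟨h1, h2⟩)
            · rw [hii]
              have := hd_mem i0
              omega
            · have : d i ≠ k + 1 := fun hc => hud i0 i (hi0.trans hc.symm)
              omega
        have hnot : i0 ∉ Finset.univ.filter (fun i : Fin n => u i ≤ k ∧ k < d i) := by
          simp only [Finset.mem_filter, Finset.mem_univ, true_and]
          omega
        rw [hset, Finset.card_insert_of_notMem hnot]
        omega
      · -- down step at k+1
        have hmem : (k + 1) ∈ U ∪ D := by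
          rw [hUDeq, Finset.mem_Icc]; omega
        rw [Finset.mem_union] at hmem
        have hnotU : (k + 1) ∉ U := by
          rw [hU, Finset.mem_image]
          rintro ⟨i, _, hi⟩
          have := hu_up i
          rw [hi] at this
          simp only [Nat.add_sub_cancel] at this
          omega
        obtain ⟨i0, _, hi0⟩ := Finset.mem_image.mp (hmem.resolve_left hnotU)
        have hset : Finset.univ.filter (fun i : Fin n => u i ≤ k ∧ k < d i)
            = insert i0 (Finset.univ.filter (fun i : Fin n => u i ≤ k + 1 ∧ k + 1 < d i)) := by
          ext i
          simp only [Finset.mem_filter, Finset.mem_insert, Finset.mem_univ, true_and]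
          constructor
          · rintro ⟨h1, h2⟩
            by_cases hii : i = i0
            · exact Or.inl hii
            · refine Or.inr ⟨by omega, ?_⟩
              have : d i ≠ k + 1 := fun hc => hii (hd_inj (hc.trans hi0.symm))
              omega
          · rintro (hii | ⟨h1, h2⟩)
            · rw [hii]
              have := hd_mem i0
              omega
            · have : u i ≠ k + 1 := by
                intro hc
                apply hnotU
                rw [hU, Finset.mem_image]
                exact ⟨i, Finset.mem_univ i, hc⟩
              omega
        have hnot : i0 ∉ Finset.univ.filter (fun i : Fin n => u i ≤ k + 1 ∧ k + 1 < d i) := by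
          simp only [Finset.mem_filter, Finset.mem_univ, true_and]
          omega
        rw [hset, Finset.card_insert_of_notMem hnot] at ihk
        omega
  -- area formula
  have harea : (∑ i ∈ Finset.range (2 * n + 1), h i) = ∑ i : Fin n, (d i - u i) := by
    have h1 : (∑ k ∈ Finset.range (2 * n + 1), h k)
        = ∑ k ∈ Finset.range (2 * n + 1), ∑ i : Fin n,
            (if u i ≤ k ∧ k < d i then 1 else 0) := by
      apply Finset.sum_congr rfl
      intro k hk
      rw [Finset.mem_range] at hk
      rw [hcard k (by omega), Finset.card_filter]
    rw [h1, Finset.sum_comm]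
    apply Finset.sum_congr rfl
    intro i _
    rw [← Finset.card_filter]
    have h2 : Finset.filter (fun k => u i ≤ k ∧ k < d i) (Finset.range (2 * n + 1))
        = Finset.Ico (u i) (d i) := by
      ext k
      simp only [Finset.mem_filter, Finset.mem_range, Finset.mem_Ico]
      have := hd_mem i
      omega
    rw [h2, Nat.card_Ico]
  -- Gauss sum : sum over the chords of (u i + d i)
  have hgauss : (∑ i : Fin n, u i) + (∑ i : Fin n, d i) = 2 * (n * n) + n := by
    have h1 : (∑ a ∈ U ∪ D, a) = (∑ i : Fin n, u i) + (∑ i : Fin n, d i) := by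
      rw [Finset.sum_union hdisj, hU, hD,
        Finset.sum_image (fun a _ b _ hab => hu_inj hab),
        Finset.sum_image (fun a _ b _ hab => hd_inj hab)]
    have h2 : (∑ a ∈ Finset.Icc 1 (2 * n), a) = ∑ a ∈ Finset.range (2 * n + 1), a := by
      have : Finset.range (2 * n + 1) = insert 0 (Finset.Icc 1 (2 * n)) := by
        ext a
        simp only [Finset.mem_range, Finset.mem_insert, Finset.mem_Icc]
        omega
      rw [this, Finset.sum_insert (by simp), zero_add]
    have h3 := Finset.sum_range_id_mul_two (2 * n + 1)
    have h4 : (2 * n + 1) * (2 * n + 1 - 1) = 2 * (2 * (n * n) + n) := by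
      simp only [Nat.add_sub_cancel]; ring
    rw [hUDeq] at h1
    omega
  -- sum of half-gaps
  have hsm : (∑ i : Fin n, d i) = (∑ i : Fin n, u i) + 2 * (∑ i : Fin n, m i) + n := by
    have h1 : (∑ i : Fin n, d i) = ∑ i : Fin n, (u i + 2 * m i + 1) :=
      Finset.sum_congr rfl (fun i _ => hdm i)
    rw [h1, Finset.sum_add_distrib, Finset.sum_add_distrib, ← Finset.mul_sum,
      Finset.sum_const, Finset.card_univ, Fintype.card_fin, smul_eq_mul, mul_one]
  have hkey : (∑ i : Fin n, u i) + (∑ i : Fin n, m i) = n * n := by omega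
  -- area in terms of m
  have harea2 : (∑ i ∈ Finset.range (2 * n + 1), h i) = 2 * (∑ i : Fin n, m i) + n := by
    rw [harea]
    have h1 : ∀ i : Fin n, d i - u i = 2 * m i + 1 := by
      intro i
      have := hdm i
      omega
    rw [Finset.sum_congr rfl (fun i _ => h1 i), Finset.sum_add_distrib, ← Finset.mul_sum,
      Finset.sum_const, Finset.card_univ, Fintype.card_fin, smul_eq_mul, mul_one]
  -- R is the image of the choice function f
  set f : Fin n → ℕ := fun i => if u i ∈ R then u i else d i with hf
  have hf_inj : Function.Injective f := by
    intro i j hij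
    by_contra hne
    rw [hf] at hij
    simp only at hij
    by_cases h1 : u i ∈ R <;> by_cases h2 : u j ∈ R <;> simp [h1, h2] at hij
    · exact hne (hu_inj hij)
    · exact hud i j hij
    · exact hud j i hij.symm
    · exact hne (hd_inj hij)
  have hfR : Finset.image f Finset.univ = R := by
    apply Finset.eq_of_subset_of_card_le
    · intro a ha
      rw [Finset.mem_image] at ha
      obtain ⟨i, _, hi⟩ := ha
      rw [hf] at hi
      simp only at hi
      by_cases h1 : u i ∈ R
      · rw [← hi]; simpa [h1] using h1
      · rcases hRchord i with ⟨h2, _⟩ | ⟨_, h3⟩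
        · exact absurd h2 h1
        · rw [← hi]; simpa [h1] using h3
    · rw [Finset.card_image_of_injective _ hf_inj, Finset.card_univ, Fintype.card_fin, hRcard]
  have hsumR : (∑ k ∈ R, k) = ∑ i : Fin n, f i := by
    rw [← hfR, Finset.sum_image (fun a _ b _ hab => hf_inj hab)]
  -- split over chosen up-steps vs chosen down-steps
  set S : Finset (Fin n) := Finset.univ.filter (fun i : Fin n => u i ∈ R) with hS
  set Sc : Finset (Fin n) := Finset.univ.filter (fun i : Fin n => ¬ (u i ∈ R)) with hSc
  have hcards : S.card + Sc.card = n := by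
    rw [hS, hSc, Finset.card_filter_add_card_filter_not, Finset.card_univ,
      Fintype.card_fin]
  have hsplitf : (∑ i : Fin n, f i) = (∑ i ∈ S, u i) + ((∑ i ∈ Sc, u i)
      + 2 * (∑ i ∈ Sc, m i) + Sc.card) := by
    have e1 : (∑ i ∈ S, f i) = ∑ i ∈ S, u i := by
      apply Finset.sum_congr rfl
      intro i hi
      rw [hS] at hi
      simp only [Finset.mem_filter] at hi
      simp [hf, hi.2]
    have e2 : (∑ i ∈ Sc, f i) = (∑ i ∈ Sc, u i) + 2 * (∑ i ∈ Sc, m i) + Sc.card := by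
      have e0 : (∑ i ∈ Sc, f i) = ∑ i ∈ Sc, (u i + 2 * m i + 1) := by
        apply Finset.sum_congr rfl
        intro i hi
        rw [hSc] at hi
        simp only [Finset.mem_filter] at hi
        simp only [hf, hi.2, if_false]
        exact hdm i
      rw [e0, Finset.sum_add_distrib, Finset.sum_add_distrib, ← Finset.mul_sum,
        Finset.sum_const, smul_eq_mul, mul_one]
    have e3 : (∑ i ∈ S, f i) + (∑ i ∈ Sc, f i) = ∑ i : Fin n, f i := by
      rw [hS, hSc]
      exact Finset.sum_filter_add_sum_filter_not Finset.univ _ _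
    omega
  have hsplitu : (∑ i ∈ S, u i) + (∑ i ∈ Sc, u i) = ∑ i : Fin n, u i := by
    rw [hS, hSc]
    exact Finset.sum_filter_add_sum_filter_not Finset.univ _ _
  -- final parity computation
  apply neg_one_pow_eq_of_even_add
  have hdiv : ((∑ i ∈ Finset.range (2 * n + 1), h i) - n) / 2 = ∑ i : Fin n, m i := by
    omega
  rw [hsumR, hdiv, hsplitf]
  have hXle : (∑ i ∈ Sc, m i) ≤ ∑ i : Fin n, m i :=
    Finset.sum_le_sum_of_subset (Finset.subset_univ Sc)
  rw [Nat.even_iff]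
  have hnn : (n * n + n) % 2 = 0 := by
    have : n * n + n = n * (n + 1) := by ring
    rw [this, Nat.even_iff.mp (Nat.even_mul_succ_self n)]
  omega
end

section
/- Let A be a 2n×2n matrix over a commutative ring, x an invertible element, and X, Y ⊆ {1,...,2n} disjoint subsets. Define Ã by Ã_{i,j} = A_{i,j} · x^{1_{i∈X} + 1_{j∈Y} − 1_{i∈Y} − 1_{j∈X}}. Then Σ_R (−1)^{n + ΣR} x^{2(|R∩X| − |R∩Y|)} det A_R^S = x^{|X|−|Y|} pf(Ã − Ãᵗ), where the sum is over all size-n subsets R ⊆ {1,...,2n}, S = {1,...,2n}\R, both ordered increasingly, A_R^S is the submatrix with rows indexed by R and columns by S, ΣR is the sum of elements of R, and pf denotes the Pfaffian. -/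
open Matrix
/-- The Pfaffian of a `2n × 2n` real matrix, via the averaged permutation formula
`pf M = (1/(2ⁿ n!)) ∑_σ sgn(σ) ∏_{i=1}^{n} M_{σ(2i−1), σ(2i)}`. -/
noncomputable def pfaffian {n : ℕ} (M : Matrix (Fin (2 * n)) (Fin (2 * n)) ℝ) : ℝ :=
  (1 / ((2 : ℝ) ^ n * n.factorial)) *
    ∑ σ : Equiv.Perm (Fin (2 * n)), ((Equiv.Perm.sign σ : ℤ) : ℝ) *
      ∏ i : Fin n,
        M (σ ⟨2 * (i : ℕ), by have := i.isLt; omega⟩)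
          (σ ⟨2 * (i : ℕ) + 1, by have := i.isLt; omega⟩)

/-!
Expanding each factor `(B - Bᵀ) (σ (2i)) (σ (2i+1))` of the Pfaffian sum and absorbing the
transposed terms into `σ`, by composing with the transpositions of the positions `2i, 2i+1`,
gives `Σ_σ sgn σ ∏ᵢ (B - Bᵀ) (σ (2i)) (σ (2i+1)) = 2ⁿ Σ_σ sgn σ ∏ᵢ B (σ (2i)) (σ (2i+1))`.
A permutation `σ` is determined by the set `R` of values at the even positions together with
two permutations of `Fin n`, ordering `R` and `S = Rᶜ`; summing over these gives
`n! · det B_R^S` times the sign of the interleaving permutation `2i ↦ rᵢ, 2i+1 ↦ sᵢ`, which is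
`(-1) ^ Σ_{r ∈ R} r` (positions counted from `0`). Hence `pf (B - Bᵀ) = Σ_R ± det B_R^S`.
Finally `Ã = D A D⁻¹` with `D = diag (x ^ (1_X - 1_Y))`, so
`det Ã_R^S = x ^ (f R - f S) · det A_R^S` where `f T = |T ∩ X| - |T ∩ Y|` and
`f R + f S = |X| - |Y|`.
-/

open Equiv Finset

@[to_additive]
lemma Finset.prod_orderEmbOfFin {α M : Type*} [LinearOrder α] [CommMonoid M] (s : Finset α)
    {k : ℕ} (h : s.card = k) (f : α → M) : ∏ i, f (s.orderEmbOfFin h i) = ∏ x ∈ s, f x := by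
  simpa using (prod_map univ (s.orderEmbOfFin h).toEmbedding f).symm

lemma Finset.card_filter_orderEmbOfFin_lt_add {N k l : ℕ} (s : Finset (Fin N)) (hs : s.card = k)
    (hc : sᶜ.card = l) (x : Fin N) :
    #{i | s.orderEmbOfFin hs i < x} + #{j | sᶜ.orderEmbOfFin hc j < x} = x := by
  simp only [card_filter]
  rw [sum_orderEmbOfFin s hs (fun y => if y < x then 1 else 0),
    sum_orderEmbOfFin sᶜ hc (fun y => if y < x then 1 else 0), sum_add_sum_compl, ← card_filter,
    filter_gt_eq_Iio, Fin.card_Iio]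

lemma Equiv.Perm.sign_symm_trans_eq_prod {α : Type*} [Fintype α] [DecidableEq α] {m : ℕ}
    (e g : α ≃ Fin m) :
    Perm.sign (e.symm.trans g) = ∏ y, ∏ x, if e x < e y ∧ g y < g x then -1 else 1 := by
  set σ := e.symm.trans g
  have inversion (i j : Fin m) : (if i < j then (if σ i < σ j then 1 else -1) else 1 : ℤˣ)
      = if i < j ∧ σ j < σ i then -1 else 1 := by
    by_cases hij : i < j
    · rcases (σ.injective.ne hij.ne).lt_or_gt with h | h <;> simp [hij, h, h.not_gt]
    · simp [hij]
  rw [Perm.sign_eq_prod_prod_Iio, ← e.prod_comp]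
  refine prod_congr rfl fun y _ => ?_
  rw [← filter_gt_eq_Iio, prod_filter, ← e.prod_comp]
  refine prod_congr rfl fun x _ => ?_
  simpa [σ] using inversion (e x) (e y)

lemma sum_sign_mul_prod_eq_sign_mul_det {K ι : Type*} [CommRing K] [Fintype ι] [DecidableEq ι]
    (M : Matrix ι ι K) (π : Perm ι) :
    ∑ ρ : Perm ι, ((Perm.sign ρ : ℤ) : K) * ∏ i, M (π i) (ρ i) = Perm.sign π * M.det := by
  rw [← det_permute, ← det_transpose, det_apply']
  rfl

lemma det_submatrix_of_mul_mul {K m ι : Type*} [CommRing K] [Fintype ι] [DecidableEq ι]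
    (A : Matrix m m K) (u v : m → K) (r c : ι → m) :
    ((of fun i j => u i * A i j * v j).submatrix r c).det
      = (∏ i, u (r i)) * (∏ j, v (c j)) * (A.submatrix r c).det := by
  have : (of fun i j => u i * A i j * v j).submatrix r c
      = of fun i j => v (c j) * of (fun i j => u (r i) * A.submatrix r c i j) i j := by
    ext i j; simp only [submatrix_apply, of_apply]; ring
  rw [this, det_mul_row, det_mul_column]
  ring

lemma prod_zpow_eq_zpow_sum₀ {G ι : Type*} [CommGroupWithZero G] {x : G} (hx : x ≠ 0)
    (s : Finset ι) (f : ι → ℤ) : ∏ i ∈ s, x ^ f i = x ^ ∑ i ∈ s, f i := by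
  classical
  induction s using Finset.induction_on with
  | empty => simp
  | insert a s ha ih => rw [sum_insert ha, prod_insert ha, zpow_add₀ hx, ih]

lemma det_submatrix_orderEmbOfFin_conj_zpow {α K : Type*} [LinearOrder α] [Field K] {x : K}
    (hx : x ≠ 0) (f : α → ℤ) (A : Matrix α α K) {s t : Finset α} {k : ℕ} (hs : s.card = k)
    (ht : t.card = k) :
    ((of fun i j => x ^ f i * A i j * x ^ (-f j)).submatrix (s.orderEmbOfFin hs)
        (t.orderEmbOfFin ht)).det
      = x ^ (∑ i ∈ s, f i - ∑ j ∈ t, f j) *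
          (A.submatrix (s.orderEmbOfFin hs) (t.orderEmbOfFin ht)).det := by
  rw [det_submatrix_of_mul_mul, prod_orderEmbOfFin (f := fun i => x ^ f i),
    prod_orderEmbOfFin (f := fun i => x ^ (-f i)), prod_zpow_eq_zpow_sum₀ hx,
    prod_zpow_eq_zpow_sum₀ hx, ← zpow_add₀ hx, sum_neg_distrib, sub_eq_add_neg]

def pairPos (n : ℕ) : Fin 2 × Fin n ≃ Fin (2 * n) :=
  (Equiv.prodComm _ _).trans (finProdFinEquiv.trans (finCongr (Nat.mul_comm n 2)))

section Positions

variable {n : ℕ}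

@[simp]
lemma pairPos_val (k : Fin 2) (i : Fin n) : (pairPos n (k, i) : ℕ) = 2 * i + k := by
  simp [pairPos, add_comm]

lemma pairPos_lt_pairPos {k l : Fin 2} {i j : Fin n} :
    pairPos n (k, i) < pairPos n (l, j) ↔ 2 * (i : ℕ) + k < 2 * j + l := by
  rw [Fin.lt_def, pairPos_val, pairPos_val]

end Positions

section PairingSum

variable {K : Type*} [CommRing K] {n : ℕ}

def pairingSum (B : Matrix (Fin (2 * n)) (Fin (2 * n)) K) : K :=
  ∑ σ : Perm (Fin (2 * n)), ((Perm.sign σ : ℤ) : K) *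
    ∏ i : Fin n, B (σ (pairPos n (0, i))) (σ (pairPos n (1, i)))

lemma pfaffian_eq_pairingSum (M : Matrix (Fin (2 * n)) (Fin (2 * n)) ℝ) :
    pfaffian M = ((2 : ℝ) ^ n * n.factorial)⁻¹ * pairingSum M := by
  have h0 : ∀ i : Fin n, pairPos n (0, i) = ⟨2 * i, by omega⟩ := fun i => Fin.ext (by simp)
  have h1 : ∀ i : Fin n, pairPos n (1, i) = ⟨2 * i + 1, by omega⟩ := fun i => Fin.ext (by simp)
  simp only [pfaffian, pairingSum, one_div, h0, h1]

def swapPairs (V : Finset (Fin n)) : Perm (Fin (2 * n)) :=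
  (pairPos n).permCongr (prodCongrLeft fun i => if i ∈ V then swap 0 1 else 1)

lemma swapPairs_apply (V : Finset (Fin n)) (k : Fin 2) (i : Fin n) :
    swapPairs V (pairPos n (k, i)) = pairPos n ((if i ∈ V then swap 0 1 else 1) k, i) := by
  simp [swapPairs, permCongr_apply]

lemma sign_swapPairs (V : Finset (Fin n)) : Perm.sign (swapPairs V) = (-1) ^ V.card := by
  simp [swapPairs, Perm.sign_prodCongrLeft, apply_ite Perm.sign, prod_ite_mem]

lemma pairingSum_sub_transpose (B : Matrix (Fin (2 * n)) (Fin (2 * n)) K) :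
    pairingSum (B - Bᵀ) = 2 ^ n * pairingSum B := by
  have swapped : ∀ T : Finset (Fin n),
      ∑ σ : Perm (Fin (2 * n)), ((Perm.sign σ : ℤ) : K) *
        ((∏ i ∈ T, B (σ (pairPos n (0, i))) (σ (pairPos n (1, i)))) *
          ∏ i ∈ univ \ T, -B (σ (pairPos n (1, i))) (σ (pairPos n (0, i))))
        = pairingSum B := by
    intro T
    set τ := swapPairs (univ \ T)
    rw [pairingSum]
    refine Eq.trans ?_ (Equiv.sum_comp (Equiv.mulRight τ) _)
    refine sum_congr rfl fun σ _ => ?_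
    have kept : ∀ i ∈ T, B ((σ * τ) (pairPos n (0, i))) ((σ * τ) (pairPos n (1, i)))
        = B (σ (pairPos n (0, i))) (σ (pairPos n (1, i))) := fun i hi => by
      simp [τ, swapPairs_apply, hi]
    have flipped : ∀ i ∈ univ \ T, B ((σ * τ) (pairPos n (0, i))) ((σ * τ) (pairPos n (1, i)))
        = B (σ (pairPos n (1, i))) (σ (pairPos n (0, i))) := fun i hi => by
      simp [τ, swapPairs_apply, hi]
    rw [coe_mulRight, Perm.sign_mul, sign_swapPairs, ← prod_sdiff (subset_univ T),
      prod_congr rfl kept, prod_congr rfl flipped, prod_neg]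
    push_cast
    ring
  calc pairingSum (B - Bᵀ)
      = ∑ σ : Perm (Fin (2 * n)), ((Perm.sign σ : ℤ) : K) * ∑ T ∈ univ.powerset,
          (∏ i ∈ T, B (σ (pairPos n (0, i))) (σ (pairPos n (1, i)))) *
            ∏ i ∈ univ \ T, -B (σ (pairPos n (1, i))) (σ (pairPos n (0, i))) := by
        simp only [pairingSum, Matrix.sub_apply, transpose_apply, sub_eq_add_neg, prod_add]
    _ = ∑ T ∈ univ.powerset, pairingSum B := by
        simp only [mul_sum]
        rw [sum_comm]
        exact sum_congr rfl fun T _ => swapped T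
    _ = 2 ^ n * pairingSum B := by simp

end PairingSum

section Interleave

variable {n : ℕ} {R : Finset (Fin (2 * n))}

lemma card_compl_of_card_eq (hR : R.card = n) : Rᶜ.card = n := by
  rw [card_compl, hR, Fintype.card_fin]; omega

variable (hR : R.card = n)

lemma orderEmbOfFin_ne_orderEmbOfFin_compl (i j : Fin n) :
    R.orderEmbOfFin hR i ≠ Rᶜ.orderEmbOfFin (card_compl_of_card_eq hR) j := fun h =>
  mem_compl.1 (h ▸ Rᶜ.orderEmbOfFin_mem _ j) (R.orderEmbOfFin_mem hR i)

noncomputable def blockEquiv : Fin 2 × Fin n ≃ Fin (2 * n) :=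
  Equiv.ofBijective (fun p =>
      ![⇑(R.orderEmbOfFin hR), ⇑(Rᶜ.orderEmbOfFin (card_compl_of_card_eq hR))] p.1 p.2) <| by
    refine (Fintype.bijective_iff_injective_and_card _).2 ⟨?_, by simp⟩
    rintro ⟨k, i⟩ ⟨l, j⟩ h
    fin_cases k <;> fin_cases l <;> simp at h
    · simp [h]
    · exact absurd h (orderEmbOfFin_ne_orderEmbOfFin_compl hR i j)
    · exact absurd h.symm (orderEmbOfFin_ne_orderEmbOfFin_compl hR j i)
    · simp [h]

@[simp]
lemma blockEquiv_zero (i : Fin n) : blockEquiv hR (0, i) = R.orderEmbOfFin hR i := rfl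

@[simp]
lemma blockEquiv_one (i : Fin n) :
    blockEquiv hR (1, i) = Rᶜ.orderEmbOfFin (card_compl_of_card_eq hR) i := rfl

noncomputable def interleave : Perm (Fin (2 * n)) := (pairPos n).symm.trans (blockEquiv hR)

lemma sign_interleave : Perm.sign (interleave hR) = (-1) ^ ∑ r ∈ R, (r : ℕ) := by
  rw [interleave, Perm.sign_symm_trans_eq_prod]
  set g := blockEquiv hR
  have same_block (k : Fin 2) (i j : Fin n) :
      (if pairPos n (k, j) < pairPos n (k, i) ∧ g (k, i) < g (k, j) then -1 else 1 : ℤˣ) = 1 := by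
    refine if_neg fun ⟨h1, h2⟩ => ?_
    rw [pairPos_lt_pairPos] at h1
    fin_cases k <;> simp only [Fin.zero_eta, Fin.mk_one, g, blockEquiv_zero, blockEquiv_one,
      OrderEmbedding.lt_iff_lt, Fin.lt_def] at h2 <;> omega
  -- `g` is increasing on rows and on columns, so inversions only involve a row `i` and a
  -- column `j`, and each such pair contributes the sign of `[j < i] + [g (1, j) < g (0, i)]`.
  have mixed_blocks (i j : Fin n) :
      ((if pairPos n (0, i) < pairPos n (1, j) ∧ g (1, j) < g (0, i) then -1 else 1) *
        (if pairPos n (1, j) < pairPos n (0, i) ∧ g (0, i) < g (1, j) then -1 else 1) : ℤˣ)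
        = (if j < i then -1 else 1) * (if g (1, j) < g (0, i) then -1 else 1) := by
    have later : pairPos n (1, j) < pairPos n (0, i) ↔ j < i := by
      rw [pairPos_lt_pairPos, Fin.lt_def, Fin.val_zero, Fin.val_one]; omega
    have earlier : pairPos n (0, i) < pairPos n (1, j) ↔ ¬ j < i := by
      rw [pairPos_lt_pairPos, Fin.lt_def, Fin.val_zero, Fin.val_one]; omega
    simp only [later, earlier]
    rcases (show g (0, i) ≠ g (1, j) from
      orderEmbOfFin_ne_orderEmbOfFin_compl hR i j).lt_or_gt with h | h <;>
      by_cases hji : j < i <;> simp [h, h.not_gt, hji]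
  have count (i : Fin n) : #{j | j < i} + #{j | g (1, j) < g (0, i)} = (g (0, i) : ℕ) := by
    rw [← card_filter_orderEmbOfFin_lt_add R hR (card_compl_of_card_eq hR) (g (0, i))]
    congr 1
    simp [g]
  calc _ = ∏ i, ∏ j,
        ((if j < i then -1 else 1) * (if g (1, j) < g (0, i) then -1 else 1) : ℤˣ) := by
        simp only [Fintype.prod_prod_type, Fin.prod_univ_two, same_block, prod_const_one, one_mul,
          mul_one]
        rw [mul_comm, prod_comm]
        simp only [← prod_mul_distrib, mixed_blocks]
    _ = ∏ i, (-1) ^ (g (0, i) : ℕ) := by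
        refine prod_congr rfl fun i _ => ?_
        rw [prod_mul_distrib, prod_ite, prod_ite, ← count i, pow_add]
        simp
    _ = (-1) ^ ∑ r ∈ R, (r : ℕ) := by
        rw [prod_pow_eq_pow_sum]
        simp [g, sum_orderEmbOfFin]

end Interleave

section Expansion

variable {n : ℕ} {R : Finset (Fin (2 * n))} (hR : R.card = n)

noncomputable def joinPerm (π ρ : Perm (Fin n)) : Perm (Fin (2 * n)) :=
  (pairPos n).symm.trans ((prodCongrRight ![π, ρ]).trans (blockEquiv hR))

@[simp]
lemma joinPerm_zero (π ρ : Perm (Fin n)) (i : Fin n) :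
    joinPerm hR π ρ (pairPos n (0, i)) = R.orderEmbOfFin hR (π i) := by
  simp [joinPerm]

@[simp]
lemma joinPerm_one (π ρ : Perm (Fin n)) (i : Fin n) :
    joinPerm hR π ρ (pairPos n (1, i)) = Rᶜ.orderEmbOfFin (card_compl_of_card_eq hR) (ρ i) := by
  simp [joinPerm]

lemma sign_joinPerm (π ρ : Perm (Fin n)) :
    Perm.sign (joinPerm hR π ρ) = Perm.sign π * Perm.sign ρ * Perm.sign (interleave hR) := by
  simp [joinPerm, interleave, Perm.sign_prodCongrRight, Fin.prod_univ_two]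

lemma range_joinPerm_zero (π ρ : Perm (Fin n)) :
    Set.range (fun i => joinPerm hR π ρ (pairPos n (0, i))) = R := by
  simp only [joinPerm_zero]
  exact (EquivLike.range_comp (R.orderEmbOfFin hR) π).trans (R.range_orderEmbOfFin hR)

end Expansion

lemma joinPerm_bijective {n : ℕ} :
    Function.Bijective fun t : {R // R ∈ (univ : Finset (Fin (2 * n))).powersetCard n} ×
      Perm (Fin n) × Perm (Fin n) => joinPerm (mem_powersetCard_univ.1 t.1.2) t.2.1 t.2.2 := by
  refine (Fintype.bijective_iff_injective_and_card _).2 ⟨?_, ?_⟩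
  · rintro ⟨⟨R, hR⟩, π, ρ⟩ ⟨⟨R', hR'⟩, π', ρ'⟩ h
    simp only at h
    have hRn := mem_powersetCard_univ.1 hR
    obtain rfl : R = R' := coe_injective <| by
      rw [← range_joinPerm_zero hRn π ρ, ← range_joinPerm_zero (mem_powersetCard_univ.1 hR') π' ρ',
        h]
    obtain rfl : π = π' := Equiv.ext fun i => (R.orderEmbOfFin hRn).injective <| by
      simpa using congr($h (pairPos n (0, i)))
    obtain rfl : ρ = ρ' :=
      Equiv.ext fun i => (Rᶜ.orderEmbOfFin (card_compl_of_card_eq hRn)).injective <| by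
      simpa using congr($h (pairPos n (1, i)))
    rfl
  · simp only [Fintype.card_prod, Fintype.card_coe, card_powersetCard, Fintype.card_perm,
      Fintype.card_fin, card_univ, ← mul_assoc]
    simpa [two_mul] using Nat.choose_mul_factorial_mul_factorial (Nat.le_add_left n n)

lemma pairingSum_eq_sum_det {K : Type*} [CommRing K] {n : ℕ}
    (B : Matrix (Fin (2 * n)) (Fin (2 * n)) K) :
    pairingSum B = n.factorial * ∑ R ∈ ((univ : Finset (Fin (2 * n))).powersetCard n).attach,
      ((Perm.sign (interleave (mem_powersetCard_univ.1 R.2)) : ℤ) : K) *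
        (B.submatrix (R.1.orderEmbOfFin (mem_powersetCard_univ.1 R.2))
          (R.1ᶜ.orderEmbOfFin (card_compl_of_card_eq (mem_powersetCard_univ.1 R.2)))).det := by
  rw [pairingSum, ← Fintype.sum_bijective _ joinPerm_bijective _ _ fun _ => rfl,
    Fintype.sum_prod_type, univ_eq_attach, mul_sum]
  refine sum_congr rfl fun R _ => ?_
  set hR := mem_powersetCard_univ.1 R.2
  set M := B.submatrix (R.1.orderEmbOfFin hR) (R.1ᶜ.orderEmbOfFin (card_compl_of_card_eq hR))
  have sign_sq (π : Perm (Fin n)) : ((Perm.sign π : ℤ) : K) * (Perm.sign π : ℤ) = 1 := by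
    rw [← Int.cast_mul, ← Units.val_mul, Int.units_mul_self, Units.val_one, Int.cast_one]
  have inner (π : Perm (Fin n)) :
      ∑ ρ, ((Perm.sign (joinPerm hR π ρ) : ℤ) : K) *
        ∏ i, B (joinPerm hR π ρ (pairPos n (0, i))) (joinPerm hR π ρ (pairPos n (1, i)))
        = (Perm.sign (interleave hR) : ℤ) * M.det := by
    calc _ = (Perm.sign π : ℤ) * (Perm.sign (interleave hR) : ℤ) *
          ∑ ρ, ((Perm.sign ρ : ℤ) : K) * ∏ i, M (π i) (ρ i) := by
          simp only [joinPerm_zero, joinPerm_one, sign_joinPerm, Units.val_mul, Int.cast_mul,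
            mul_sum]
          exact sum_congr rfl fun ρ _ => by simp only [M, submatrix_apply]; ring
      _ = (Perm.sign (interleave hR) : ℤ) * M.det := by
          rw [sum_sign_mul_prod_eq_sign_mul_det]
          linear_combination ((Perm.sign (interleave hR) : ℤ) : K) * M.det * sign_sq π
  simp only [Fintype.sum_prod_type, inner, sum_const, card_univ, Fintype.card_perm,
    Fintype.card_fin, nsmul_eq_mul]

lemma neg_one_pow_add_sum_succ {M : Type*} [Monoid M] [HasDistribNeg M] {n : ℕ}
    {R : Finset (Fin (2 * n))} (hR : R.card = n) :
    (-1 : M) ^ (n + ∑ i ∈ R, ((i : ℕ) + 1)) = (-1) ^ ∑ r ∈ R, (r : ℕ) := by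
  rw [sum_add_distrib, sum_const, hR, smul_eq_mul, mul_one, add_comm, add_assoc, ← two_mul,
    pow_add, pow_mul, neg_one_sq, one_pow, mul_one]

lemma pfaffian_sub_transpose {n : ℕ} (B : Matrix (Fin (2 * n)) (Fin (2 * n)) ℝ) :
    pfaffian (B - Bᵀ) = ∑ R ∈ ((univ : Finset (Fin (2 * n))).powersetCard n).attach,
      (-1 : ℝ) ^ (n + ∑ i ∈ R.1, ((i : ℕ) + 1)) *
        (B.submatrix (R.1.orderEmbOfFin (mem_powersetCard_univ.1 R.2))
          (R.1ᶜ.orderEmbOfFin (card_compl_of_card_eq (mem_powersetCard_univ.1 R.2)))).det := by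
  rw [pfaffian_eq_pairingSum, pairingSum_sub_transpose, pairingSum_eq_sum_det,
    ← mul_assoc (2 ^ n : ℝ), inv_mul_cancel_left₀ (by positivity)]
  refine sum_congr rfl fun R _ => ?_
  rw [sign_interleave, neg_one_pow_add_sum_succ (mem_powersetCard_univ.1 R.2)]
  push_cast
  rfl

/-- Let `A` be a `2n × 2n` real matrix, `x ≠ 0`, and `X, Y ⊆ {1, …, 2n}` disjoint.
Define `Ã` by `Ã_{i,j} = A_{i,j} · x^{1_{i∈X} + 1_{j∈Y} − 1_{i∈Y} − 1_{j∈X}}`.  Then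
`∑_R (−1)^{n + ΣR} x^{2(|R∩X| − |R∩Y|)} det A_R^S = x^{|X|−|Y|} pf(Ã − Ãᵗ)`, where `R`
runs over the size-`n` subsets of `{1, …, 2n}`, `S` is the complement of `R`, both
sorted increasingly, `A_R^S` is the submatrix with rows `R` and columns `S`, and `ΣR`
is the sum of the (1-based) labels of the elements of `R`. -/
theorem stmt_10 {n : ℕ} (A : Matrix (Fin (2 * n)) (Fin (2 * n)) ℝ)
    (x : ℝ) (hx : x ≠ 0) (X Y : Finset (Fin (2 * n))) :
    ∑ R ∈ ((Finset.univ : Finset (Fin (2 * n))).powersetCard n).attach,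
      ((-1 : ℝ) ^ (n + ∑ i ∈ R.1, ((i : ℕ) + 1)) *
        x ^ (2 * (((R.1 ∩ X).card : ℤ) - ((R.1 ∩ Y).card : ℤ))) *
        (A.submatrix
          (fun a : Fin n =>
            ((R.1.orderIsoOfFin (Finset.mem_powersetCard_univ.mp R.2)) a : Fin (2 * n)))
          (fun b : Fin n =>
            (((R.1ᶜ).orderIsoOfFin
              (by rw [Finset.card_compl, Finset.mem_powersetCard_univ.mp R.2,
                  Fintype.card_fin]; omega)) b : Fin (2 * n)))).det)
      = x ^ ((X.card : ℤ) - (Y.card : ℤ)) *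
          pfaffian ((Matrix.of fun i j => A i j *
              x ^ (((if i ∈ X then 1 else 0) + (if j ∈ Y then 1 else 0)
                - (if i ∈ Y then 1 else 0) - (if j ∈ X then 1 else 0) : ℤ)))
            - (Matrix.of fun i j => A i j *
              x ^ (((if i ∈ X then 1 else 0) + (if j ∈ Y then 1 else 0)
                - (if i ∈ Y then 1 else 0) - (if j ∈ X then 1 else 0) : ℤ)))ᵀ) := by
  set f : Fin (2 * n) → ℤ := fun i => (if i ∈ X then 1 else 0) - (if i ∈ Y then 1 else 0)
  have sum_f (T : Finset (Fin (2 * n))) :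
      ∑ i ∈ T, f i = ((T ∩ X).card : ℤ) - ((T ∩ Y).card : ℤ) := by
    simp only [f, sum_sub_distrib, sum_boole, filter_mem_eq_inter]
  have sum_f_compl (R : Finset (Fin (2 * n))) :
      ∑ i ∈ Rᶜ, f i = ((X.card : ℤ) - Y.card) - ∑ i ∈ R, f i := by
    rw [eq_sub_iff_add_eq', sum_add_sum_compl, sum_f, univ_inter, univ_inter]
  have scaled : (of fun i j => A i j * x ^ (((if i ∈ X then 1 else 0) + (if j ∈ Y then 1 else 0)
      - (if i ∈ Y then 1 else 0) - (if j ∈ X then 1 else 0) : ℤ)))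
      = of fun i j => x ^ f i * A i j * x ^ (-f j) := by
    ext i j
    rw [of_apply, of_apply, mul_comm (x ^ f i), mul_assoc, ← zpow_add₀ hx]
    congr 2
    ring
  rw [scaled, pfaffian_sub_transpose, mul_sum]
  refine sum_congr rfl fun R _ => ?_
  have exponents (C D : ℤ) : x ^ (2 * D) = x ^ C * x ^ (D - (C - D)) := by
    rw [← zpow_add₀ hx]
    ring_nf
  simp only [coe_orderIsoOfFin_apply]
  rw [det_submatrix_orderEmbOfFin_conj_zpow hx, sum_f_compl, sum_f,
    exponents ((X.card : ℤ) - Y.card)]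
  ring
end
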